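/- arXiv:hep-ph/9409405 — 3 statements merged into one kernel-verified Lean document; each statement's English description precedes it below -/
import Mathlib

section
/- For every positive integer n, the alternating binomial sum with squared denominators satisfies ∑_{l=1}^{n} C(n,l) (-1)^{l+1} / l² = (1/2) ∑_{l=1}^{n-1} 1/l² + (1/n) ∑_{l=1}^{n} 1/l + (1/2) (∑_{l=1}^{n-1} 1/l)², where C(n,l) is the binomial coefficient and empty sums are zero. -/
/-!
Write `S_k(n) = ∑_{l=1}^{n} C(n,l) (-1)^{l+1} / l^k`. Pascal's rule together with the absorption
identity `C(n,l-1) / l = C(n+1,l) / (n+1)` gives `S_{k+1}(n+1) = S_{k+1}(n) + S_k(n+1) / (n+1)`,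
while `S_0(n+1) = 1` is the vanishing of the alternating sum of a row of Pascal's triangle.
Hence `S_1(n) = H_n`, and `S_2(n)` telescopes to `(H_n² + H_n^{(2)}) / 2`.
-/

open Finset

section

variable (K : Type*) [Field K]

noncomputable def alternatingBinomialSum (k n : ℕ) : K :=
  ∑ l ∈ Icc 1 n, (n.choose l : K) * (-1) ^ (l + 1) / (l : K) ^ k

theorem alternatingBinomialSum_zero_succ (n : ℕ) : alternatingBinomialSum K 0 (n + 1) = 1 := by
  have h := Int.alternating_sum_range_choose_of_ne (Nat.add_one_ne_zero n)
  rw [Nat.range_succ_eq_Icc_zero, ← insert_Icc_add_one_left_eq_Icc (Nat.zero_le _),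
    sum_insert (by simp)] at h
  have h' : (1 : K) + ∑ l ∈ Icc 1 (n + 1), (-1) ^ l * ((n + 1).choose l : K) = 0 := by
    exact_mod_cast congrArg (Int.cast : ℤ → K) h
  simp only [alternatingBinomialSum, pow_zero, div_one, pow_succ, mul_neg, mul_one,
    sum_neg_distrib, mul_comm _ ((-1 : K) ^ _)]
  linear_combination -h'

variable [CharZero K]

theorem alternatingBinomialSum_succ_succ (k n : ℕ) :
    alternatingBinomialSum K (k + 1) (n + 1) =
      alternatingBinomialSum K (k + 1) n + alternatingBinomialSum K k (n + 1) / (n + 1) := by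
  have pascal : ∀ l ∈ Icc 1 (n + 1),
      ((n + 1).choose l : K) * (-1) ^ (l + 1) / (l : K) ^ (k + 1) =
        (n.choose l : K) * (-1) ^ (l + 1) / (l : K) ^ (k + 1) +
          ((n + 1).choose l : K) * (-1) ^ (l + 1) / (l : K) ^ k / (n + 1) := by
    intro l hl
    obtain ⟨j, rfl⟩ : ∃ j, l = j + 1 := ⟨l - 1, by grind⟩
    have absorb : ((n : K) + 1) * n.choose j = (n + 1).choose (j + 1) * (j + 1) := by
      exact_mod_cast Nat.add_one_mul_choose_eq n j
    nth_rw 1 [Nat.choose_succ_succ']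
    push_cast
    field_simp
    linear_combination ((j : K) + 1) ^ k * absorb
  rw [alternatingBinomialSum, sum_congr rfl pascal, sum_add_distrib, ← sum_div,
    sum_Icc_succ_top (by omega), Nat.choose_succ_self]
  simp [alternatingBinomialSum]

theorem alternatingBinomialSum_one (n : ℕ) :
    alternatingBinomialSum K 1 n = ∑ l ∈ Icc 1 n, 1 / (l : K) := by
  induction n with
  | zero => simp [alternatingBinomialSum]
  | succ n ih =>
    rw [alternatingBinomialSum_succ_succ, alternatingBinomialSum_zero_succ, ih,
      sum_Icc_succ_top (by omega)]
    push_cast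
    ring

theorem alternatingBinomialSum_two (n : ℕ) :
    alternatingBinomialSum K 2 n =
      ((∑ l ∈ Icc 1 n, 1 / (l : K)) ^ 2 + ∑ l ∈ Icc 1 n, 1 / (l : K) ^ 2) / 2 := by
  induction n with
  | zero => simp [alternatingBinomialSum]
  | succ n ih =>
    rw [alternatingBinomialSum_succ_succ, alternatingBinomialSum_one, ih,
      sum_Icc_succ_top (by omega), sum_Icc_succ_top (by omega)]
    push_cast
    field_simp
    ring

end

theorem alternating_binomial_sum_squared_denominators_general (n : ℕ) :
    ∑ l ∈ Finset.Icc 1 n, (n.choose l : ℝ) * (-1 : ℝ) ^ (l + 1) / (l : ℝ) ^ 2 =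
      (1 / 2) * ∑ l ∈ Finset.Icc 1 (n - 1), 1 / (l : ℝ) ^ 2
        + (1 / (n : ℝ)) * ∑ l ∈ Finset.Icc 1 n, 1 / (l : ℝ)
        + (1 / 2) * (∑ l ∈ Finset.Icc 1 (n - 1), 1 / (l : ℝ)) ^ 2 := by
  rcases n with _ | m
  · simp
  rw [← alternatingBinomialSum, alternatingBinomialSum_two, Nat.add_sub_cancel,
    sum_Icc_succ_top (by omega), sum_Icc_succ_top (by omega)]
  push_cast
  field_simp
  ring

/-- For every positive integer `n`,
`∑_{l=1}^{n} C(n,l) (-1)^{l+1} / l²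
  = (1/2) ∑_{l=1}^{n-1} 1/l² + (1/n) ∑_{l=1}^{n} 1/l + (1/2) (∑_{l=1}^{n-1} 1/l)²`,
as an identity of real numbers (empty sums are zero). -/
theorem alternating_binomial_sum_squared_denominators (n : ℕ) (hn : 1 ≤ n) :
    ∑ l ∈ Finset.Icc 1 n, (n.choose l : ℝ) * (-1 : ℝ) ^ (l + 1) / (l : ℝ) ^ 2 =
      (1 / 2) * ∑ l ∈ Finset.Icc 1 (n - 1), 1 / (l : ℝ) ^ 2
        + (1 / (n : ℝ)) * ∑ l ∈ Finset.Icc 1 n, 1 / (l : ℝ)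
        + (1 / 2) * (∑ l ∈ Finset.Icc 1 (n - 1), 1 / (l : ℝ)) ^ 2 :=
  alternating_binomial_sum_squared_denominators_general n
end

section
/- Let p₁, p₂ ∈ ℝ⁴ be lightlike with respect to the Minkowski form (η(p₁,p₁) = 0 = η(p₂,p₂)) and satisfy η(p₁,p₂) > 0, so that Q = p₁ − p₂ is spacelike and nonzero. Then there exists a lightlike vector Δ ∈ ℝ⁴ (η(Δ,Δ) = 0) such that η(Δ, Q) = 0, i.e. η(Δ,p₁) = η(Δ,p₂), and moreover η(Δ,p₁) ≠ 0. -/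
/-!
Put `m = η(p₁, p₂) > 0`. The vector `p₁ + p₂` has square `2m > 0` and pairs to `m` with both
`p₁` and `p₂`. If `w` is orthogonal to `p₁` and `p₂` with `η(w, w) < 0`, then
`Δ = s (p₁ + p₂) + w` with `2 m s² = -η(w, w)` is lightlike and `η(Δ, p₁) = η(Δ, p₂) = s m ≠ 0`.
Such a `w` is the projection of a spatial basis vector `eᵢ` off `span {p₁, p₂}`; its square is
`-m (m + 2 p₁ᵢ p₂ᵢ)`, which is negative for some `i` because `p₁` and `p₂` lie in the same half
of the light cone.
-/

/-- The Minkowski bilinear form on `ℝ⁴`: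
`η(x,y) = x₀y₀ − x₁y₁ − x₂y₂ − x₃y₃`. -/
def minkowski (x y : Fin 4 → ℝ) : ℝ :=
  x 0 * y 0 - x 1 * y 1 - x 2 * y 2 - x 3 * y 3

namespace LinearMap.BilinForm.IsSymm

variable {V : Type*} [AddCommGroup V] [Module ℝ V] {B : LinearMap.BilinForm ℝ V} {p₁ p₂ : V}

theorem exists_isotropic_orthogonal_sub_of_neg (hB : B.IsSymm) (h₁ : B p₁ p₁ = 0)
    (h₂ : B p₂ p₂ = 0) (h₁₂ : 0 < B p₁ p₂) {w : V} (hw₁ : B w p₁ = 0) (hw₂ : B w p₂ = 0)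
    (hw : B w w < 0) :
    ∃ Δ, B Δ Δ = 0 ∧ B Δ (p₁ - p₂) = 0 ∧ B Δ p₁ ≠ 0 := by
  set s := √(-B w w / (2 * B p₁ p₂))
  have hs : 0 < s := Real.sqrt_pos.2 (by apply div_pos <;> linarith)
  have hs2 : s ^ 2 * (2 * B p₁ p₂) = -B w w := by
    rw [Real.sq_sqrt (by apply div_nonneg <;> linarith)]; field_simp
  have h₂₁ : B p₂ p₁ = B p₁ p₂ := hB.eq p₂ p₁
  have hp₁w : B p₁ w = 0 := (hB.eq p₁ w).trans hw₁
  have hp₂w : B p₂ w = 0 := (hB.eq p₂ w).trans hw₂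
  set Δ := s • (p₁ + p₂) + w
  have hΔ₁ : B Δ p₁ = s * B p₁ p₂ := by simp [Δ, h₁, h₂₁, hw₁]
  have hΔ₂ : B Δ p₂ = s * B p₁ p₂ := by simp [Δ, h₂, hw₂]
  have hΔw : B Δ w = B w w := by simp [Δ, hp₁w, hp₂w]
  refine ⟨Δ, ?_, ?_, ?_⟩
  · calc B Δ Δ = B Δ (s • (p₁ + p₂) + w) := rfl
      _ = s * (B Δ p₁ + B Δ p₂) + B Δ w := by rw [map_add, map_smul, map_add, smul_eq_mul]
      _ = 0 := by rw [hΔ₁, hΔ₂, hΔw]; linear_combination hs2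
  · rw [map_sub, hΔ₁, hΔ₂, sub_self]
  · rw [hΔ₁]; positivity

theorem exists_neg_orthogonal_of_lt (hB : B.IsSymm) (h₁ : B p₁ p₁ = 0) (h₂ : B p₂ p₂ = 0)
    (h₁₂ : 0 < B p₁ p₂) {n : V} (hn : B p₁ p₂ * B n n < 2 * B n p₁ * B n p₂) :
    ∃ w, B w p₁ = 0 ∧ B w p₂ = 0 ∧ B w w < 0 := by
  -- `w` is `B p₁ p₂ • n` projected off `span {p₁, p₂}`
  set w := B p₁ p₂ • n - B n p₂ • p₁ - B n p₁ • p₂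
  have h₂₁ : B p₂ p₁ = B p₁ p₂ := hB.eq p₂ p₁
  have hw₁ : B w p₁ = 0 := by simp [w, h₁, h₂₁]; ring
  have hw₂ : B w p₂ = 0 := by simp [w, h₂]; ring
  refine ⟨w, hw₁, hw₂, ?_⟩
  have hwn : B w n = B p₁ p₂ * B n n - 2 * B n p₁ * B n p₂ := by
    simp [w, ← hB.eq n p₁, ← hB.eq n p₂]; ring
  have hw : B w w = B p₁ p₂ * B w n := by
    calc B w w = B w (B p₁ p₂ • n - B n p₂ • p₁ - B n p₁ • p₂) := rfl
      _ = B p₁ p₂ * B w n := by simp [hw₁, hw₂]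
  rw [hw, hwn]
  exact mul_neg_of_pos_of_neg h₁₂ (by linarith)

end LinearMap.BilinForm.IsSymm

def minkowskiBilinForm : LinearMap.BilinForm ℝ (Fin 4 → ℝ) :=
  LinearMap.mk₂ ℝ minkowski (fun _ _ _ => by simp only [minkowski, Pi.add_apply]; ring)
    (fun _ _ _ => by simp only [minkowski, Pi.smul_apply, smul_eq_mul]; ring)
    (fun _ _ _ => by simp only [minkowski, Pi.add_apply]; ring)
    (fun _ _ _ => by simp only [minkowski, Pi.smul_apply, smul_eq_mul]; ring)

@[simp]
theorem minkowskiBilinForm_apply (x y : Fin 4 → ℝ) : minkowskiBilinForm x y = minkowski x y :=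
  rfl

theorem minkowskiBilinForm_isSymm : minkowskiBilinForm.IsSymm :=
  ⟨fun x y => by simp only [minkowskiBilinForm_apply, minkowski]; ring⟩

theorem minkowski_single_one {i : Fin 4} (hi : i ≠ 0) (x : Fin 4 → ℝ) :
    minkowski (Pi.single i 1) x = -x i := by
  fin_cases i <;> simp_all [minkowski]

-- Cauchy–Schwarz for the spatial parts: `|p⃗₁ · p⃗₂| ≤ |p₁ 0| |p₂ 0|`.
theorem mul_apply_zero_pos_of_lightlike {p₁ p₂ : Fin 4 → ℝ} (h₁ : minkowski p₁ p₁ = 0)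
    (h₂ : minkowski p₂ p₂ = 0) (h₁₂ : 0 < minkowski p₁ p₂) : 0 < p₁ 0 * p₂ 0 := by
  simp only [minkowski] at h₁ h₂ h₁₂
  nlinarith [sq_nonneg (p₁ 1 * p₂ 2 - p₁ 2 * p₂ 1), sq_nonneg (p₁ 1 * p₂ 3 - p₁ 3 * p₂ 1),
    sq_nonneg (p₁ 2 * p₂ 3 - p₁ 3 * p₂ 2),
    sq_nonneg (p₁ 0 * p₂ 0 + p₁ 1 * p₂ 1 + p₁ 2 * p₂ 2 + p₁ 3 * p₂ 3), mul_pos h₁₂ h₁₂]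

-- The three quantities sum to `η(p₁, p₂) + 2 p₁₀ p₂₀ > 0`.
theorem exists_spatial_index_pos {p₁ p₂ : Fin 4 → ℝ} (h₁ : minkowski p₁ p₁ = 0)
    (h₂ : minkowski p₂ p₂ = 0) (h₁₂ : 0 < minkowski p₁ p₂) :
    ∃ i ≠ 0, 0 < minkowski p₁ p₂ + 2 * p₁ i * p₂ i := by
  have h₀ := mul_apply_zero_pos_of_lightlike h₁ h₂ h₁₂
  by_contra! h
  have hx := h 1 (by decide)
  have hy := h 2 (by decide)
  have hz := h 3 (by decide)
  simp only [minkowski] at h₁₂ hx hy hz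
  linarith

/-- If `p₁, p₂ ∈ ℝ⁴` are lightlike with `η(p₁,p₂) > 0` (so that
`Q = p₁ − p₂` is spacelike and nonzero), then there exists a lightlike vector `Δ`
with `η(Δ, p₁ − p₂) = 0` (i.e. `η(Δ,p₁) = η(Δ,p₂)`) and `η(Δ,p₁) ≠ 0`. -/
theorem exists_lightlike_orthogonal_to_difference (p₁ p₂ : Fin 4 → ℝ)
    (h₁ : minkowski p₁ p₁ = 0) (h₂ : minkowski p₂ p₂ = 0)
    (h₁₂ : 0 < minkowski p₁ p₂) :
    ∃ Δ : Fin 4 → ℝ, minkowski Δ Δ = 0 ∧ minkowski Δ (p₁ - p₂) = 0 ∧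
      minkowski Δ p₁ ≠ 0 := by
  obtain ⟨i, hi, hpos⟩ := exists_spatial_index_pos h₁ h₂ h₁₂
  have hn : minkowski p₁ p₂ * minkowski (Pi.single i 1) (Pi.single i 1) <
      2 * minkowski (Pi.single i 1) p₁ * minkowski (Pi.single i 1) p₂ := by
    simp only [minkowski_single_one hi, Pi.single_eq_same]
    linarith
  obtain ⟨w, hw₁, hw₂, hw⟩ := minkowskiBilinForm_isSymm.exists_neg_orthogonal_of_lt h₁ h₂ h₁₂ hn
  exact minkowskiBilinForm_isSymm.exists_isotropic_orthogonal_sub_of_neg h₁ h₂ h₁₂ hw₁ hw₂ hw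
end

section
/- Let n ≥ 1 be an integer, let p ∈ ℝⁿ be nonzero, and let a, b be real numbers with 0 < a < n/2, 0 < b < n/2 and a + b > n/2. Then ∫_{ℝⁿ} ‖k‖^{−2a} ‖k + p‖^{−2b} dk = π^{n/2} ‖p‖^{n − 2a − 2b} · Γ(a + b − n/2) Γ(n/2 − a) Γ(n/2 − b) / ( Γ(a) Γ(b) Γ(n − a − b) ). -/
/-!
Schwinger parametrisation: for `x > 0`, `Γ(c) x^{-c} = ∫₀^∞ s^{c-1} e^{-s x} ds`, applied to
`x = ‖k‖²` and `x = ‖k + p‖²`. All integrands are nonnegative, so Tonelli lets the `k`-integral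
be done first; completing the square makes it Gaussian, with value
`π^{d/2} (s + t)^{-d/2} e^{-s t ‖p‖² / (s + t)}`. The substitution `t = s u` turns the `s`-integral
into a Gamma integral, and what remains is the Beta integral
`∫₀^∞ u^{x-1} (1 + u)^{-x-y} du = Γ(x) Γ(y) / Γ(x + y)` with `x = d/2 - a`, `y = d/2 - b`.
-/

open MeasureTheory Real Set

theorem lintegral_rpow_mul_exp_neg_mul_Ioi {c r : ℝ} (hc : 0 < c) (hr : 0 < r) :
    ∫⁻ t in Ioi 0, ENNReal.ofReal (t ^ (c - 1) * rexp (-(r * t))) =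
      ENNReal.ofReal (r ^ (-c) * Gamma c) := by
  have hint : IntegrableOn (fun t : ℝ => t ^ (c - 1) * rexp (-(r * t))) (Ioi 0) := by
    simpa only [rpow_one, neg_mul] using
      integrableOn_rpow_mul_exp_neg_mul_rpow (p := 1) (by linarith : -1 < c - 1) one_pos hr
  rw [← ofReal_integral_eq_lintegral_ofReal hint, integral_rpow_mul_exp_neg_mul_Ioi hc hr,
    one_div, inv_rpow hr.le, rpow_neg hr.le]
  filter_upwards [self_mem_ae_restrict measurableSet_Ioi] with t (ht : 0 < t)
  positivity

theorem setLIntegral_Ioi_zero_eq_mul_comp_mul_left {c : ℝ} (hc : 0 < c) (g : ℝ → ENNReal) :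
    ∫⁻ t in Ioi 0, g t = ENNReal.ofReal c * ∫⁻ u in Ioi 0, g (c * u) := by
  have h := lintegral_image_eq_lintegral_abs_deriv_mul (measurableSet_Ioi (a := (0 : ℝ)))
    (fun u _ => ((hasDerivAt_id' u).const_mul c).hasDerivWithinAt)
    (mul_right_injective₀ hc.ne').injOn g
  simp only [image_mul_left_Ioi hc, mul_zero, mul_one, abs_of_pos hc] at h
  rw [h, lintegral_const_mul' _ _ ENNReal.ofReal_ne_top]

theorem lintegral_rpow_mul_one_add_rpow_neg_Ioi {x y : ℝ} (hx : 0 < x) (hy : 0 < y) :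
    ∫⁻ u in Ioi 0, ENNReal.ofReal (u ^ (x - 1) * (1 + u) ^ (-(x + y))) =
      ENNReal.ofReal (Gamma x * Gamma y / Gamma (x + y)) := by
  have hΓ : 0 < Gamma (x + y) := Gamma_pos_of_pos (by linarith)
  -- Both `Γ(x + y) (1 + u)^{-(x+y)}` and `Γ(x) s^{-x}` are Gamma integrals; Tonelli exchanges them.
  have gamma_in_s : ∀ u ∈ Ioi (0 : ℝ),
      ENNReal.ofReal (u ^ (x - 1) * (1 + u) ^ (-(x + y))) * ENNReal.ofReal (Gamma (x + y)) =
        ∫⁻ s in Ioi 0, ENNReal.ofReal (u ^ (x - 1)) *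
          ENNReal.ofReal (s ^ (x + y - 1) * rexp (-((1 + u) * s))) := by
    intro u (hu : 0 < u)
    rw [lintegral_const_mul' _ _ ENNReal.ofReal_ne_top,
      lintegral_rpow_mul_exp_neg_mul_Ioi (by linarith) (by linarith),
      ← ENNReal.ofReal_mul (by positivity), ← ENNReal.ofReal_mul (by positivity), mul_assoc]
  have gamma_in_u : ∀ s ∈ Ioi (0 : ℝ),
      ∫⁻ u in Ioi 0, ENNReal.ofReal (u ^ (x - 1)) *
          ENNReal.ofReal (s ^ (x + y - 1) * rexp (-((1 + u) * s))) =
        ENNReal.ofReal (Gamma x) * ENNReal.ofReal (s ^ (y - 1) * rexp (-(1 * s))) := by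
    intro s (hs : 0 < s)
    calc _ = ∫⁻ u in Ioi 0, ENNReal.ofReal (s ^ (x + y - 1) * rexp (-s)) *
          ENNReal.ofReal (u ^ (x - 1) * rexp (-(s * u))) := by
          refine setLIntegral_congr_fun measurableSet_Ioi fun u (hu : 0 < u) => ?_
          rw [← ENNReal.ofReal_mul (by positivity), ← ENNReal.ofReal_mul (by positivity),
            show -((1 + u) * s) = -s + -(s * u) by ring, exp_add]
          congr 1
          ring
      _ = _ := by
          rw [lintegral_const_mul' _ _ ENNReal.ofReal_ne_top,
            lintegral_rpow_mul_exp_neg_mul_Ioi hx hs,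
            ← ENNReal.ofReal_mul (by positivity), ← ENNReal.ofReal_mul (Gamma_pos_of_pos hx).le,
            one_mul, show y - 1 = (x + y - 1) + -x by ring, rpow_add hs]
          congr 1
          ring
  have key : (∫⁻ u in Ioi 0, ENNReal.ofReal (u ^ (x - 1) * (1 + u) ^ (-(x + y)))) *
      ENNReal.ofReal (Gamma (x + y)) = ENNReal.ofReal (Gamma x * Gamma y) := by
    rw [← lintegral_mul_const' _ _ ENNReal.ofReal_ne_top,
      setLIntegral_congr_fun measurableSet_Ioi gamma_in_s,
      lintegral_lintegral_swap (by apply Measurable.aemeasurable; fun_prop),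
      setLIntegral_congr_fun measurableSet_Ioi gamma_in_u,
      lintegral_const_mul' _ _ ENNReal.ofReal_ne_top, lintegral_rpow_mul_exp_neg_mul_Ioi hy one_pos,
      one_rpow, one_mul, ← ENNReal.ofReal_mul (Gamma_pos_of_pos hx).le]
  rw [ENNReal.ofReal_div_of_pos hΓ, ← key,
    ENNReal.mul_div_cancel_right (ENNReal.ofReal_pos.2 hΓ).ne' ENNReal.ofReal_ne_top]

/-- What is left of the integrand in the Schwinger parameters `s, t` after the Gaussian integral
over the loop momentum in dimension `d`, up to the factor `π ^ (d / 2)`; `P = ‖p‖ ^ 2`. -/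
noncomputable def schwingerIntegrand (a b d P s t : ℝ) : ℝ :=
  s ^ (a - 1) * t ^ (b - 1) * (s + t) ^ (-(d / 2)) * rexp (-(s * t / (s + t) * P))

section InnerProductSpace

variable {V : Type*} [NormedAddCommGroup V] [InnerProductSpace ℝ V]

theorem norm_sq_mul_add_norm_add_sq_mul (k p : V) {s t : ℝ} (hst : s + t ≠ 0) :
    ‖k‖ ^ 2 * s + ‖k + p‖ ^ 2 * t =
      (s + t) * ‖k + (t / (s + t)) • p‖ ^ 2 + s * t / (s + t) * ‖p‖ ^ 2 := by
  rw [norm_add_sq_real, norm_add_sq_real, real_inner_smul_right, norm_smul, mul_pow,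
    Real.norm_eq_abs, sq_abs]
  field_simp
  ring

variable [FiniteDimensional ℝ V] [MeasurableSpace V] [BorelSpace V]

theorem lintegral_exp_neg_mul_norm_add_sq {b : ℝ} (hb : 0 < b) (w : V) :
    ∫⁻ v : V, ENNReal.ofReal (rexp (-b * ‖v + w‖ ^ 2)) =
      ENNReal.ofReal ((π / b) ^ ((Module.finrank ℝ V : ℝ) / 2)) := by
  have hint : Integrable (fun v : V => rexp (-b * ‖v‖ ^ 2)) :=
    Integrable.of_integral_ne_zero <| by
      rw [GaussianFourier.integral_rexp_neg_mul_sq_norm hb]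
      exact (rpow_pos_of_pos (div_pos pi_pos hb) _).ne'
  rw [lintegral_add_right_eq_self (fun v => ENNReal.ofReal (rexp (-b * ‖v‖ ^ 2))) w,
    ← ofReal_integral_eq_lintegral_ofReal hint (ae_of_all _ fun v => (exp_pos _).le),
    GaussianFourier.integral_rexp_neg_mul_sq_norm hb]

theorem lintegral_momentum_eq_schwingerIntegrand {a b s t : ℝ} (hs : 0 < s) (ht : 0 < t) (p : V) :
    ∫⁻ k : V, ENNReal.ofReal (s ^ (a - 1) * rexp (-(‖k‖ ^ 2 * s))) *
        ENNReal.ofReal (t ^ (b - 1) * rexp (-(‖k + p‖ ^ 2 * t))) =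
      ENNReal.ofReal (π ^ ((Module.finrank ℝ V : ℝ) / 2)) *
        ENNReal.ofReal (schwingerIntegrand a b (Module.finrank ℝ V) (‖p‖ ^ 2) s t) := by
  have hst : 0 < s + t := add_pos hs ht
  have split : ∀ k : V,
      ENNReal.ofReal (s ^ (a - 1) * rexp (-(‖k‖ ^ 2 * s))) *
          ENNReal.ofReal (t ^ (b - 1) * rexp (-(‖k + p‖ ^ 2 * t))) =
        ENNReal.ofReal (s ^ (a - 1) * t ^ (b - 1) * rexp (-(s * t / (s + t) * ‖p‖ ^ 2))) *
          ENNReal.ofReal (rexp (-(s + t) * ‖k + (t / (s + t)) • p‖ ^ 2)) := by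
    intro k
    rw [← ENNReal.ofReal_mul (by positivity), ← ENNReal.ofReal_mul (by positivity)]
    congr 1
    calc _ = s ^ (a - 1) * t ^ (b - 1) * rexp (-(‖k‖ ^ 2 * s + ‖k + p‖ ^ 2 * t)) := by
          rw [neg_add, exp_add]; ring
      _ = _ := by
          rw [norm_sq_mul_add_norm_add_sq_mul k p hst.ne', neg_add, exp_add, neg_mul]; ring
  rw [lintegral_congr split, lintegral_const_mul' _ _ ENNReal.ofReal_ne_top,
    lintegral_exp_neg_mul_norm_add_sq hst, ← ENNReal.ofReal_mul (by positivity),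
    ← ENNReal.ofReal_mul (by positivity), schwingerIntegrand, div_rpow pi_pos.le hst.le,
    rpow_neg hst.le]
  congr 1
  ring

theorem ofReal_Gamma_mul_Gamma_mul_lintegral_norm_rpow_mul_norm_add_rpow [Nontrivial V]
    {a b : ℝ} (ha : 0 < a) (hb : 0 < b) (p : V) :
    ENNReal.ofReal (Gamma a * Gamma b) *
        ∫⁻ k : V, ENNReal.ofReal (‖k‖ ^ (-(2 * a)) * ‖k + p‖ ^ (-(2 * b))) =
      ENNReal.ofReal (π ^ ((Module.finrank ℝ V : ℝ) / 2)) *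
        ∫⁻ s in Ioi 0, ∫⁻ t in Ioi 0,
          ENNReal.ofReal (schwingerIntegrand a b (Module.finrank ℝ V) (‖p‖ ^ 2) s t) := by
  set F : V → ℝ → ℝ → ENNReal := fun k s t =>
    ENNReal.ofReal (s ^ (a - 1) * rexp (-(‖k‖ ^ 2 * s))) *
      ENNReal.ofReal (t ^ (b - 1) * rexp (-(‖k + p‖ ^ 2 * t)))
  have gamma_rep : ∀ {c x : ℝ}, 0 < c → 0 < x →
      ∫⁻ s in Ioi 0, ENNReal.ofReal (s ^ (c - 1) * rexp (-(x ^ 2 * s))) =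
        ENNReal.ofReal (x ^ (-(2 * c)) * Gamma c) := by
    intro c x hc hx
    rw [lintegral_rpow_mul_exp_neg_mul_Ioi hc (by positivity), ← rpow_two, ← rpow_mul hx.le]
    ring_nf
  have schwinger : ∀ᵐ k : V,
      ENNReal.ofReal (Gamma a * Gamma b) *
          ENNReal.ofReal (‖k‖ ^ (-(2 * a)) * ‖k + p‖ ^ (-(2 * b))) =
        ∫⁻ s in Ioi 0, ∫⁻ t in Ioi 0, F k s t := by
    filter_upwards [compl_mem_ae_iff.mpr (measure_singleton (0 : V)),
      compl_mem_ae_iff.mpr (measure_singleton (-p))] with k (hk : k ≠ 0) (hkp : k ≠ -p)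
    rw [lintegral_lintegral_mul (by fun_prop) (by fun_prop), gamma_rep ha (norm_pos_iff.2 hk),
      gamma_rep hb (norm_pos_iff.2 fun h => hkp (eq_neg_of_add_eq_zero_left h)),
      ← ENNReal.ofReal_mul (by positivity), ← ENNReal.ofReal_mul (by positivity)]
    congr 1
    ring
  calc _ = ∫⁻ k : V, ∫⁻ s in Ioi 0, ∫⁻ t in Ioi 0, F k s t := by
        rw [← lintegral_const_mul' _ _ ENNReal.ofReal_ne_top]
        exact lintegral_congr_ae schwinger
    _ = ∫⁻ s in Ioi 0, ∫⁻ t in Ioi 0, ∫⁻ k : V, F k s t := by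
        rw [lintegral_lintegral_swap (by apply Measurable.aemeasurable; fun_prop)]
        refine lintegral_congr fun s => ?_
        rw [lintegral_lintegral_swap (by apply Measurable.aemeasurable; fun_prop)]
    _ = ∫⁻ s in Ioi 0, ∫⁻ t in Ioi 0, ENNReal.ofReal (π ^ ((Module.finrank ℝ V : ℝ) / 2)) *
          ENNReal.ofReal (schwingerIntegrand a b (Module.finrank ℝ V) (‖p‖ ^ 2) s t) :=
        setLIntegral_congr_fun measurableSet_Ioi fun s hs =>
          setLIntegral_congr_fun measurableSet_Ioi fun t ht =>
            lintegral_momentum_eq_schwingerIntegrand hs ht p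
    _ = _ := by simp_rw [lintegral_const_mul' _ _ ENNReal.ofReal_ne_top]

end InnerProductSpace

theorem lintegral_lintegral_schwingerIntegrand {a b d P : ℝ} (hab : d / 2 < a + b)
    (ha : a < d / 2) (hb : b < d / 2) (hP : 0 < P) :
    ∫⁻ s in Ioi 0, ∫⁻ t in Ioi 0, ENNReal.ofReal (schwingerIntegrand a b d P s t) =
      ENNReal.ofReal (P ^ (d / 2 - a - b) *
        (Gamma (a + b - d / 2) * Gamma (d / 2 - a) * Gamma (d / 2 - b) / Gamma (d - a - b))) := by
  have hc : 0 < a + b - d / 2 := by linarith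
  -- the substitution `t = s u` separates the variables
  have separate : ∀ s ∈ Ioi (0 : ℝ),
      ∫⁻ t in Ioi 0, ENNReal.ofReal (schwingerIntegrand a b d P s t) =
        ∫⁻ u in Ioi 0, ENNReal.ofReal (u ^ (b - 1) * (1 + u) ^ (-(d / 2))) *
          ENNReal.ofReal (s ^ (a + b - d / 2 - 1) * rexp (-(u / (1 + u) * P * s))) := by
    intro s (hs : 0 < s)
    rw [setLIntegral_Ioi_zero_eq_mul_comp_mul_left hs,
      ← lintegral_const_mul' _ _ ENNReal.ofReal_ne_top]
    refine setLIntegral_congr_fun measurableSet_Ioi fun u (hu : 0 < u) => ?_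
    rw [← ENNReal.ofReal_mul hs.le, ← ENNReal.ofReal_mul (by positivity), schwingerIntegrand,
      show s + s * u = s * (1 + u) by ring, mul_rpow hs.le hu.le, mul_rpow hs.le (by positivity),
      show s * (s * u) / (s * (1 + u)) * P = u / (1 + u) * P * s by field_simp,
      show a + b - d / 2 - 1 = (a - 1) + (b - 1) + -(d / 2) + 1 by ring, rpow_add_one hs.ne',
      rpow_add hs, rpow_add hs]
    congr 1
    ring
  have gamma_in_s : ∀ u ∈ Ioi (0 : ℝ),
      ∫⁻ s in Ioi 0, ENNReal.ofReal (u ^ (b - 1) * (1 + u) ^ (-(d / 2))) *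
          ENNReal.ofReal (s ^ (a + b - d / 2 - 1) * rexp (-(u / (1 + u) * P * s))) =
        ENNReal.ofReal (P ^ (-(a + b - d / 2)) * Gamma (a + b - d / 2)) *
          ENNReal.ofReal (u ^ ((d / 2 - a) - 1) * (1 + u) ^ (-((d / 2 - a) + (d / 2 - b)))) := by
    intro u (hu : 0 < u)
    rw [lintegral_const_mul' _ _ ENNReal.ofReal_ne_top,
      lintegral_rpow_mul_exp_neg_mul_Ioi hc (by positivity), ← ENNReal.ofReal_mul (by positivity),
      ← ENNReal.ofReal_mul (by positivity), mul_rpow (by positivity) hP.le,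
      div_rpow hu.le (by positivity),
      show d / 2 - a - 1 = (b - 1) + -(a + b - d / 2) by ring, rpow_add hu,
      show -(d / 2 - a + (d / 2 - b)) = -(d / 2) - -(a + b - d / 2) by ring,
      rpow_sub (by positivity : (0 : ℝ) < 1 + u)]
    congr 1
    ring
  rw [setLIntegral_congr_fun measurableSet_Ioi separate,
    lintegral_lintegral_swap (by apply Measurable.aemeasurable; fun_prop),
    setLIntegral_congr_fun measurableSet_Ioi gamma_in_s,
    lintegral_const_mul' _ _ ENNReal.ofReal_ne_top,
    lintegral_rpow_mul_one_add_rpow_neg_Ioi (by linarith) (by linarith),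
    ← ENNReal.ofReal_mul (by positivity [Gamma_pos_of_pos hc])]
  congr 1
  rw [show d / 2 - a - b = -(a + b - d / 2) by ring,
    show d / 2 - a + (d / 2 - b) = d - a - b by ring]
  ring

theorem one_loop_two_point_integral_eval_general (n : ℕ)
    (p : EuclideanSpace ℝ (Fin n)) (hp : p ≠ 0)
    (a b : ℝ) (ha0 : 0 < a) (ha : a < n / 2) (hb0 : 0 < b) (hb : b < n / 2)
    (hab : a + b > n / 2) :
    ∫ k : EuclideanSpace ℝ (Fin n), ‖k‖ ^ (-(2 * a)) * ‖k + p‖ ^ (-(2 * b)) =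
      π ^ ((n : ℝ) / 2) * ‖p‖ ^ ((n : ℝ) - 2 * a - 2 * b) *
        (Gamma (a + b - n / 2) * Gamma (n / 2 - a) * Gamma (n / 2 - b)) /
        (Gamma a * Gamma b * Gamma ((n : ℝ) - a - b)) := by
  have : Nontrivial (EuclideanSpace ℝ (Fin n)) := ⟨p, 0, hp⟩
  have hc : 0 < a + b - n / 2 := by linarith
  have hx : 0 < n / 2 - a := by linarith
  have hy : 0 < n / 2 - b := by linarith
  have hxy : 0 < (n : ℝ) - a - b := by linarith
  have hpow : (‖p‖ ^ 2) ^ ((n : ℝ) / 2 - a - b) = ‖p‖ ^ ((n : ℝ) - 2 * a - 2 * b) := by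
    rw [← rpow_two, ← rpow_mul (norm_nonneg p)]
    ring_nf
  have key := congrArg ENNReal.toReal
    (ofReal_Gamma_mul_Gamma_mul_lintegral_norm_rpow_mul_norm_add_rpow ha0 hb0 p)
  rw [finrank_euclideanSpace_fin,
    lintegral_lintegral_schwingerIntegrand hab ha hb (by positivity [norm_pos_iff.2 hp]),
    ENNReal.toReal_mul, ENNReal.toReal_mul, ENNReal.toReal_ofReal (by positivity),
    ENNReal.toReal_ofReal (by positivity), ENNReal.toReal_ofReal (by positivity), hpow] at key
  rw [integral_eq_lintegral_of_nonneg_ae (ae_of_all _ fun k => by positivity) (by fun_prop)]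
  exact (eq_div_of_mul_eq (by positivity) ((mul_comm _ _).trans key)).trans (by ring)

/-- For `n ≥ 1`, `p ∈ ℝⁿ` nonzero, and real `a, b` with
`0 < a < n/2`, `0 < b < n/2`, `a + b > n/2`,
`∫_{ℝⁿ} ‖k‖^{−2a} ‖k + p‖^{−2b} dk
  = π^{n/2} ‖p‖^{n−2a−2b} Γ(a+b−n/2) Γ(n/2−a) Γ(n/2−b) / (Γ(a) Γ(b) Γ(n−a−b))`. -/
theorem one_loop_two_point_integral_eval (n : ℕ) (hn : 1 ≤ n)
    (p : EuclideanSpace ℝ (Fin n)) (hp : p ≠ 0)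
    (a b : ℝ) (ha0 : 0 < a) (ha : a < n / 2) (hb0 : 0 < b) (hb : b < n / 2)
    (hab : a + b > n / 2) :
    ∫ k : EuclideanSpace ℝ (Fin n), ‖k‖ ^ (-(2 * a)) * ‖k + p‖ ^ (-(2 * b)) =
      π ^ ((n : ℝ) / 2) * ‖p‖ ^ ((n : ℝ) - 2 * a - 2 * b) *
        (Gamma (a + b - n / 2) * Gamma (n / 2 - a) * Gamma (n / 2 - b)) /
        (Gamma a * Gamma b * Gamma ((n : ℝ) - a - b)) :=
  one_loop_two_point_integral_eval_general n p hp a b ha0 ha hb0 hb hab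
end
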